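/- arXiv:math/0307269 — 3 statements merged into one kernel-verified Lean document; each statement's English description precedes it below -/
import Mathlib

section
/- Let v be a vector in E_1*V. Then for 1 ≤ i ≤ D−1 the following hold: (i) if E_i*A_{i−1}v = 0 then E_{i+1}*A_iv = 0; (ii) if E_i*A_{i+1}v = 0 then E_{i−1}*A_iv = 0. -/
open Matrix Polynomial BigOperators

noncomputable section

variable {X : Type*} [Fintype X] [DecidableEq X]

/-- The `i`-th distance matrix of the graph `G` (indexed by `ℤ`; by convention it is
the zero matrix for `i < 0` and also for `i` larger than the diameter). -/
def distMat (G : SimpleGraph X) (i : ℤ) : Matrix X X ℂ :=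
  Matrix.of fun y z => if (G.dist y z : ℤ) = i then (1 : ℂ) else 0

/-- The all-ones matrix `J`. -/
def allOnes (X : Type*) : Matrix X X ℂ := Matrix.of fun _ _ => (1 : ℂ)

/-- The `i`-th dual idempotent `Eᵢ*` with respect to the base point `x`
(indexed by `ℤ`; zero for `i < 0` and for `i` larger than the diameter). -/
def dualIdem (G : SimpleGraph X) (x : X) (i : ℤ) : Matrix X X ℂ :=
  Matrix.of fun y z => if y = z ∧ (G.dist x y : ℤ) = i then (1 : ℂ) else 0

/-- The characteristic vector `sᵢ` of the `i`-th sphere around `x`. -/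
def sphereVec (G : SimpleGraph X) (x : X) (i : ℤ) : X → ℂ :=
  fun y => if (G.dist x y : ℤ) = i then (1 : ℂ) else 0

/-- `G` is distance-regular with diameter `D` and intersection numbers `p h i j`:
`G` is connected with diameter `D`, and for all `h,i,j ≤ D` and all vertices `y,z`
at distance `h`, the number of vertices `w` with `dist y w = i` and `dist w z = j`
equals `p h i j`. -/
def IsDRG (G : SimpleGraph X) (D : ℕ) (p : ℕ → ℕ → ℕ → ℕ) : Prop :=
  G.Connected ∧ (∀ y z : X, G.dist y z ≤ D) ∧ (∃ y z : X, G.dist y z = D) ∧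
    ∀ h i j : ℕ, h ≤ D → i ≤ D → j ≤ D → ∀ y z : X, G.dist y z = h →
      (Finset.univ.filter fun w => G.dist y w = i ∧ G.dist w z = j).card = p h i j

/-- The Bose–Mesner algebra `M`, the subalgebra of `Mat_X(ℂ)` generated by the
adjacency matrix. -/
def bmAlg (G : SimpleGraph X) : Subalgebra ℂ (Matrix X X ℂ) :=
  Algebra.adjoin ℂ {distMat G 1}

/-- The Terwilliger algebra `T`, generated by `A, E₀*, …, E_D*`. -/
def twAlg (G : SimpleGraph X) (x : X) (D : ℕ) : Subalgebra ℂ (Matrix X X ℂ) :=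
  Algebra.adjoin ℂ ({distMat G 1} ∪ {B | ∃ i : ℕ, i ≤ D ∧ B = dualIdem G x (i : ℤ)})

/-- `W` is a `T`-module. -/
def IsTMod (G : SimpleGraph X) (x : X) (D : ℕ) (W : Submodule ℂ (X → ℂ)) : Prop :=
  ∀ B ∈ twAlg G x D, ∀ w ∈ W, B.mulVec w ∈ W

/-- `W` is an irreducible `T`-module. -/
def IsIrredTMod (G : SimpleGraph X) (x : X) (D : ℕ) (W : Submodule ℂ (X → ℂ)) : Prop :=
  IsTMod G x D W ∧ W ≠ ⊥ ∧
    ∀ U : Submodule ℂ (X → ℂ), U ≤ W → IsTMod G x D U → U = ⊥ ∨ U = W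

/-- `W` is thin: `dim Eᵢ* W ≤ 1` for `0 ≤ i ≤ D`. -/
def IsThin (G : SimpleGraph X) (x : X) (D : ℕ) (W : Submodule ℂ (X → ℂ)) : Prop :=
  ∀ i : ℕ, i ≤ D → Module.finrank ℂ (W.map (dualIdem G x (i : ℤ)).mulVecLin) ≤ 1

/-- `W` has endpoint `1`, i.e. `E₀* W = 0` and `E₁* W ≠ 0`. -/
def HasEndpointOne (G : SimpleGraph X) (x : X) (W : Submodule ℂ (X → ℂ)) : Prop :=
  W.map (dualIdem G x 0).mulVecLin = ⊥ ∧ W.map (dualIdem G x 1).mulVecLin ≠ ⊥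

/-- The linear map `P ↦ P v` on matrices. -/
def actOn (v : X → ℂ) : Matrix X X ℂ →ₗ[ℂ] (X → ℂ) where
  toFun P := P.mulVec v
  map_add' P Q := Matrix.add_mulVec P Q v
  map_smul' c P := by simp [Matrix.smul_mulVec]

/-- The subspace `(M; v) = {P ∈ M : P v ∈ E_D* V}`. -/
def MsubV (G : SimpleGraph X) (x : X) (D : ℕ) (v : X → ℂ) : Submodule ℂ (Matrix X X ℂ) :=
  (bmAlg G).toSubmodule ⊓
    Submodule.comap (actOn v) (LinearMap.range (dualIdem G x (D : ℤ)).mulVecLin)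

/-- The space `M(θ) = {Y ∈ M : (A - θI) Y ∈ ℂ A_D}` for `θ ∈ ℂ`. -/
def pseudoSpace (G : SimpleGraph X) (D : ℕ) (θ : ℂ) : Submodule ℂ (Matrix X X ℂ) :=
  (bmAlg G).toSubmodule ⊓
    Submodule.comap (LinearMap.mulLeft ℂ (distMat G 1 - θ • 1))
      (Submodule.span ℂ {distMat G (D : ℤ)})

/-!
Both parts come from one matrix identity. If `∂(x,z) = 1`, `∂(x,y) = i ± 1` and `w` is a
neighbour of `y` with `∂(w,z) = i ∓ 1`, the triangle inequality squeezes both diagonals of the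
quadrilateral `x z w y` to length `i`: `∂(x,w) = ∂(y,z) = i`. Hence the `(y,z)`-entry of
`E*_{i±1} A E*_i A_{i∓1} E*_1` counts the neighbours of `y` at distance `i ∓ 1` from `z` when
`∂(y,z) = i` and vanishes otherwise, i.e.
`E*_{i±1} A E*_i A_{i∓1} E*_1 = p^i_{i∓1,1} E*_{i±1} A_i E*_1`.
Applied to `v = E*_1 v`, the hypothesis kills the left side, and `p^i_{i-1,1} = c_i` and
`p^i_{i+1,1} = b_i` are nonzero in a distance-regular graph.
-/

open Finset

namespace SimpleGraph

variable {V : Type*} {G : SimpleGraph V}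

theorem Connected.exists_dist_eq_of_le_dist (hG : G.Connected) {a b : V} {k : ℕ}
    (hk : k ≤ G.dist a b) : ∃ c, G.dist a c = k ∧ G.dist c b = G.dist a b - k := by
  obtain ⟨q, hq⟩ := hG.exists_walk_length_eq_dist a b
  have h₁ : G.dist a (q.getVert k) ≤ k := (dist_le (q.take k)).trans (by simp)
  have h₂ : G.dist (q.getVert k) b ≤ G.dist a b - k := (dist_le (q.drop k)).trans (by simp [hq])
  have := hG.dist_triangle (u := a) (v := q.getVert k) (w := b)
  exact ⟨q.getVert k, by omega, by omega⟩

theorem Connected.dist_diagonals_of_dist_add_two (hG : G.Connected) {x y z w : V}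
    (hxz : G.dist x z ≤ 1) (hyw : G.dist y w ≤ 1)
    (h : G.dist x y = G.dist w z + 2 ∨ G.dist w z = G.dist x y + 2) :
    2 * G.dist y z = G.dist x y + G.dist w z ∧ 2 * G.dist x w = G.dist x y + G.dist w z := by
  have := hG.dist_triangle (u := y) (v := w) (w := z)
  have := hG.dist_triangle (u := y) (v := x) (w := z)
  have := hG.dist_triangle (u := x) (v := z) (w := y)
  have := hG.dist_triangle (u := w) (v := y) (w := z)
  have := hG.dist_triangle (u := x) (v := z) (w := w)
  have := hG.dist_triangle (u := x) (v := y) (w := w)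
  have := hG.dist_triangle (u := x) (v := w) (w := y)
  have := hG.dist_triangle (u := w) (v := x) (w := z)
  have := G.dist_comm (u := y) (v := x)
  have := G.dist_comm (u := z) (v := y)
  have := G.dist_comm (u := w) (v := y)
  have := G.dist_comm (u := z) (v := w)
  have := G.dist_comm (u := w) (v := x)
  omega

theorem Connected.card_adj_dist_dist_eq_ite [Fintype V] (hG : G.Connected) {h i j c : ℕ}
    (hc : ∀ y z, G.dist y z = i → #{w | G.dist y w = j ∧ G.dist w z = 1} = c)
    (hhj : h = j + 2 ∨ j = h + 2) (hi : h + j = 2 * i)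
    {x y z : V} (hxy : G.dist x y = h) (hxz : G.dist x z = 1) :
    #{w | G.dist y w = 1 ∧ G.dist x w = i ∧ G.dist w z = j} =
      if G.dist y z = i then c else 0 := by
  have diag : ∀ w, G.dist y w = 1 → G.dist w z = j → G.dist y z = i ∧ G.dist x w = i := by
    intro w hyw hwz
    have := hG.dist_diagonals_of_dist_add_two hxz.le hyw.le (by omega)
    omega
  split_ifs with hyz
  · rw [← hc z y (by rwa [dist_comm])]
    congr 1
    ext w
    simp only [mem_filter, mem_univ, true_and, G.dist_comm (u := z),
      G.dist_comm (u := w) (v := y)]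
    constructor
    · rintro ⟨hyw, -, hwz⟩
      exact ⟨hwz, hyw⟩
    · rintro ⟨hwz, hyw⟩
      exact ⟨hyw, (diag w hyw hwz).2, hwz⟩
  · rw [card_eq_zero, filter_eq_empty_iff]
    rintro w - ⟨hyw, -, hwz⟩
    exact hyz (diag w hyw hwz).1

end SimpleGraph

theorem dualIdem_mul_apply (G : SimpleGraph X) (x : X) (a : ℤ) (M : Matrix X X ℂ) (y z : X) :
    (dualIdem G x a * M) y z = if (G.dist x y : ℤ) = a then M y z else 0 := by
  simp [dualIdem, Matrix.mul_apply, ite_and]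

theorem mul_dualIdem_apply (G : SimpleGraph X) (x : X) (a : ℤ) (M : Matrix X X ℂ) (y z : X) :
    (M * dualIdem G x a) y z = if (G.dist x z : ℤ) = a then M y z else 0 := by
  simp [dualIdem, Matrix.mul_apply, ite_and]

theorem distMat_mul_dualIdem_mul_distMat_apply (G : SimpleGraph X) (x : X) (a b c : ℕ)
    (y z : X) : (distMat G a * dualIdem G x b * distMat G c) y z =
      #{w | G.dist y w = a ∧ G.dist x w = b ∧ G.dist w z = c} := by
  simp only [distMat, dualIdem, Matrix.mul_apply, Matrix.of_apply, card_filter, Nat.cast_sum]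
  refine sum_congr rfl fun w _ => ?_
  by_cases hyw : G.dist y w = a <;> by_cases hxw : G.dist x w = b <;>
    by_cases hwz : G.dist w z = c <;> simp [hyw, hxw, hwz, ite_and]

theorem dualIdem_distMat_dualIdem_distMat_dualIdem_one (G : SimpleGraph X) (hG : G.Connected)
    (x : X) {h i j c : ℕ}
    (hc : ∀ y z, G.dist y z = i → #{w | G.dist y w = j ∧ G.dist w z = 1} = c)
    (hhj : h = j + 2 ∨ j = h + 2) (hi : h + j = 2 * i) :
    dualIdem G x h * distMat G 1 * dualIdem G x i * distMat G j * dualIdem G x 1 =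
      (c : ℂ) • (dualIdem G x h * distMat G i * dualIdem G x 1) := by
  ext y z
  have hAEA := distMat_mul_dualIdem_mul_distMat_apply G x 1 i j y z
  rw [Nat.cast_one] at hAEA
  simp only [Matrix.mul_assoc (dualIdem G x h), Matrix.smul_apply, mul_dualIdem_apply,
    dualIdem_mul_apply, hAEA]
  by_cases hxz : G.dist x z = 1
  · by_cases hxy : G.dist x y = h
    · rw [hG.card_adj_dist_dist_eq_ite hc hhj hi hxy hxz]
      by_cases hyz : G.dist y z = i <;> simp [hxz, hxy, hyz, distMat]
    · simp [hxy]
  · simp [hxz]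

theorem dualIdem_distMat_mulVec_eq_zero (G : SimpleGraph X) (hG : G.Connected)
    (x : X) {h i j c : ℕ}
    (hc : ∀ y z, G.dist y z = i → #{w | G.dist y w = j ∧ G.dist w z = 1} = c) (hc₀ : c ≠ 0)
    (hhj : h = j + 2 ∨ j = h + 2) (hi : h + j = 2 * i)
    {v : X → ℂ} (hv : dualIdem G x 1 *ᵥ v = v)
    (hjv : dualIdem G x i *ᵥ (distMat G j *ᵥ v) = 0) :
    dualIdem G x h *ᵥ (distMat G i *ᵥ v) = 0 := by
  have := congrArg (· *ᵥ v) (dualIdem_distMat_dualIdem_distMat_dualIdem_one G hG x hc hhj hi)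
  simp only [← Matrix.mulVec_mulVec, hv, hjv, Matrix.mulVec_zero, Matrix.smul_mulVec] at this
  exact (smul_eq_zero.mp this.symm).resolve_left (by exact_mod_cast hc₀)

namespace IsDRG

variable {V : Type*} [Fintype V] {G : SimpleGraph V} {D : ℕ} {p : ℕ → ℕ → ℕ → ℕ}

theorem exists_dist_eq (hG : IsDRG G D p) {m : ℕ} (hm : m ≤ D) : ∃ y z, G.dist y z = m := by
  obtain ⟨hconn, -, ⟨y, z, hyz⟩, -⟩ := hG
  obtain ⟨c, hc, -⟩ := hconn.exists_dist_eq_of_le_dist (a := y) (b := z) (hyz ▸ hm)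
  exact ⟨y, c, hc⟩

theorem p_ne_zero (hG : IsDRG G D p) {h i j : ℕ} (hi : i ≤ D) (hj : j ≤ D) {y z w : V}
    (hyz : G.dist y z = h) (hyw : G.dist y w = i) (hwz : G.dist w z = j) : p h i j ≠ 0 := by
  rw [← hG.2.2.2 h i j (hyz ▸ hG.2.1 y z) hi hj y z hyz]
  exact card_ne_zero_of_mem (a := w) (by simp [hyw, hwz])

theorem p_pred_ne_zero (hG : IsDRG G D p) {i : ℕ} (hi₁ : 1 ≤ i) (hi : i ≤ D) :
    p i (i - 1) 1 ≠ 0 := by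
  obtain ⟨y, z, hyz⟩ := hG.exists_dist_eq hi
  obtain ⟨w, hyw, hwz⟩ :=
    hG.1.exists_dist_eq_of_le_dist (a := y) (b := z) (k := i - 1) (by omega)
  exact hG.p_ne_zero (by omega) (by omega) hyz hyw (by omega)

theorem p_succ_ne_zero (hG : IsDRG G D p) {i : ℕ} (hi : i + 1 ≤ D) : p i (i + 1) 1 ≠ 0 := by
  obtain ⟨y, z, hyz⟩ := hG.exists_dist_eq hi
  obtain ⟨w, hyw, hwz⟩ := hG.1.exists_dist_eq_of_le_dist (a := y) (b := z) (k := i) (by omega)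
  exact hG.p_ne_zero hi (by omega) hyw hyz (by rw [G.dist_comm]; omega)

end IsDRG

theorem stmt7_general (G : SimpleGraph X) (D : ℕ) (p : ℕ → ℕ → ℕ → ℕ)
    (hdrg : IsDRG G D p) (x : X)
    (v : X → ℂ) (hvE1 : (dualIdem G x 1).mulVec v = v)
    (i : ℕ) (hi1 : 1 ≤ i) (hi2 : i ≤ D - 1) :
    ((dualIdem G x (i : ℤ)).mulVec ((distMat G ((i : ℤ) - 1)).mulVec v) = 0 →
      (dualIdem G x ((i : ℤ) + 1)).mulVec ((distMat G (i : ℤ)).mulVec v) = 0) ∧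
    ((dualIdem G x (i : ℤ)).mulVec ((distMat G ((i : ℤ) + 1)).mulVec v) = 0 →
      (dualIdem G x ((i : ℤ) - 1)).mulVec ((distMat G (i : ℤ)).mulVec v) = 0) := by
  have hcount : ∀ j ≤ D, ∀ y z, G.dist y z = i →
      #{w | G.dist y w = j ∧ G.dist w z = 1} = p i j 1 :=
    fun j hj => hdrg.2.2.2 i j 1 (by omega) hj (by omega)
  rw [show (i : ℤ) + 1 = ((i + 1 : ℕ) : ℤ) by push_cast; rfl,
    show (i : ℤ) - 1 = ((i - 1 : ℕ) : ℤ) by omega]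
  exact ⟨dualIdem_distMat_mulVec_eq_zero G hdrg.1 x (hcount _ (by omega))
      (hdrg.p_pred_ne_zero hi1 (by omega)) (by omega) (by omega) hvE1,
    dualIdem_distMat_mulVec_eq_zero G hdrg.1 x (hcount _ (by omega))
      (hdrg.p_succ_ne_zero (by omega)) (by omega) (by omega) hvE1⟩

/-- Let `v ∈ E₁* V`.  Then for `1 ≤ i ≤ D-1`:
(i) if `Eᵢ* A_{i-1} v = 0` then `E_{i+1}* A_i v = 0`;
(ii) if `Eᵢ* A_{i+1} v = 0` then `E_{i-1}* A_i v = 0`. -/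
theorem stmt7 (G : SimpleGraph X) (D : ℕ) (p : ℕ → ℕ → ℕ → ℕ)
    (hdrg : IsDRG G D p) (hD : 3 ≤ D) (x : X)
    (v : X → ℂ) (hvE1 : (dualIdem G x 1).mulVec v = v)
    (i : ℕ) (hi1 : 1 ≤ i) (hi2 : i ≤ D - 1) :
    ((dualIdem G x (i : ℤ)).mulVec ((distMat G ((i : ℤ) - 1)).mulVec v) = 0 →
      (dualIdem G x ((i : ℤ) + 1)).mulVec ((distMat G (i : ℤ)).mulVec v) = 0) ∧
    ((dualIdem G x (i : ℤ)).mulVec ((distMat G ((i : ℤ) + 1)).mulVec v) = 0 →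
      (dualIdem G x ((i : ℤ) - 1)).mulVec ((distMat G (i : ℤ)).mulVec v) = 0) :=
  stmt7_general G D p hdrg x v hvE1 i hi1 hi2
end
end

section
/- Let θ be an eigenvalue of the adjacency matrix A, and let E be a nonzero element of M satisfying AE = θE (for instance, the primitive idempotent of M associated with θ). Then M(θ) = ℂE. -/
open Matrix Polynomial BigOperators

noncomputable section

variable {X : Type*} [Fintype X] [DecidableEq X]

/-! If `(A - θI) Y = c A_D`, multiplying by `E` (for which `E A = θ E`) gives `c E A_D = 0`.
Since `b_i ≠ 0`, the three-term recurrence `A A_{i+1} = b_i A_i + a_{i+1} A_{i+1} + c_{i+2} A_{i+2}`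
would propagate `E A_D = 0` down to `E = E A_0 = 0`; hence `c = 0` and `A Y = θ Y`.
Writing `E = g(A)` and `Y = f(A)`, the product `E Y` equals both `g(θ) Y` and `f(θ) E`,
and `g(θ) ≠ 0` because the normal matrix `A - θI` cannot annihilate `(A - θI) h(A) ≠ 0`. -/

theorem Polynomial.aeval_mul_of_mul_eq_smul {R S : Type*} [CommRing R] [Ring S] [Algebra R S]
    {a b : S} {θ : R} (h : a * b = θ • b) (f : R[X]) : aeval a f * b = f.eval θ • b := by
  have := Module.End.aeval_apply_of_mem_apply_eq_smul (f := Algebra.lmul R S a) (p := f) h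
  rwa [aeval_algHom_apply] at this

theorem Matrix.mul_eq_zero_of_mul_mul_eq_zero {n R : Type*} [Fintype n] [PartialOrder R]
    [CommRing R] [StarRing R] [StarOrderedRing R] [NoZeroDivisors R]
    {C B : Matrix n n R} (hC : IsStarNormal C) (h : C * (C * B) = 0) : C * B = 0 := by
  have hCstar : Cᴴ * (C * B) = 0 := by
    have hcomm : C * Cᴴ = Cᴴ * C := hC.star_comm_self.eq.symm
    rw [← conjTranspose_mul_self_eq_zero, conjTranspose_mul, conjTranspose_conjTranspose,
      Matrix.mul_assoc, ← Matrix.mul_assoc C, hcomm, Matrix.mul_assoc, h, Matrix.mul_zero,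
      Matrix.mul_zero]
  rw [← conjTranspose_mul_self_eq_zero, conjTranspose_mul, Matrix.mul_assoc, hCstar,
    Matrix.mul_zero]

open scoped ComplexOrder in
theorem Matrix.IsHermitian.eval_ne_zero_of_mul_aeval_eq_smul {n 𝕜 : Type*} [Fintype n]
    [DecidableEq n] [RCLike 𝕜] {A : Matrix n n 𝕜} (hA : A.IsHermitian) {θ : 𝕜} {g : 𝕜[X]}
    (hg : aeval A g ≠ 0) (heig : A * aeval A g = θ • aeval A g) : g.eval θ ≠ 0 := by
  intro hroot
  obtain ⟨h, rfl⟩ : X - C θ ∣ g := dvd_iff_isRoot.mpr hroot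
  have hC : aeval A (X - C θ) = A - θ • 1 := by
    rw [map_sub, aeval_X, aeval_C, Algebra.algebraMap_eq_smul_one]
  have hnormal : IsStarNormal (A - θ • 1) := by
    refine ⟨?_⟩
    rw [star_eq_conjTranspose, conjTranspose_sub, hA.eq, conjTranspose_smul, conjTranspose_one]
    simp only [Commute, SemiconjBy, sub_mul, mul_sub, Matrix.one_mul, Matrix.mul_one,
      smul_mul_assoc, mul_smul_comm]
    module
  rw [map_mul, hC] at hg heig
  refine hg (Matrix.mul_eq_zero_of_mul_mul_eq_zero hnormal ?_)
  rw [sub_mul, heig, smul_mul_assoc, Matrix.one_mul, sub_self]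

theorem Matrix.IsHermitian.mem_span_singleton_of_mul_eq_smul {n 𝕜 : Type*} [Fintype n]
    [DecidableEq n] [RCLike 𝕜] {A E Y : Matrix n n 𝕜} (hA : A.IsHermitian) {θ : 𝕜}
    (hE : E ∈ Algebra.adjoin 𝕜 {A}) (hY : Y ∈ Algebra.adjoin 𝕜 {A}) (hE0 : E ≠ 0)
    (hAE : A * E = θ • E) (hAY : A * Y = θ • Y) : Y ∈ Submodule.span 𝕜 {E} := by
  rw [Algebra.adjoin_singleton_eq_range_aeval] at hE hY
  obtain ⟨g, rfl⟩ : ∃ g : 𝕜[X], aeval A g = E := hE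
  obtain ⟨f, rfl⟩ : ∃ f : 𝕜[X], aeval A f = Y := hY
  have hg : g.eval θ ≠ 0 := hA.eval_ne_zero_of_mul_aeval_eq_smul hE0 hAE
  have hEY : g.eval θ • aeval A f = f.eval θ • aeval A g := by
    rw [← aeval_mul_of_mul_eq_smul hAY, ← aeval_mul_of_mul_eq_smul hAE, ← map_mul, ← map_mul,
      mul_comm]
  refine Submodule.mem_span_singleton.mpr ⟨(g.eval θ)⁻¹ * f.eval θ, ?_⟩
  rw [mul_smul, ← hEY, smul_smul, inv_mul_cancel₀ hg, one_smul]

theorem SimpleGraph.Connected.exists_adj_dist_eq {V : Type*} {G : SimpleGraph V}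
    (hG : G.Connected) {y z : V} {i : ℕ} (h : G.dist y z = i + 1) :
    ∃ w, G.Adj y w ∧ G.dist w z = i := by
  obtain ⟨P, hP⟩ := hG.exists_walk_length_eq_dist y z
  cases P with
  | nil => simp_all
  | @cons _ w _ hyw Q =>
    refine ⟨w, hyw, le_antisymm ?_ ?_⟩
    · have := SimpleGraph.dist_le Q
      simp only [SimpleGraph.Walk.length_cons] at hP
      omega
    · have := hG.dist_triangle (u := y) (v := w) (w := z)
      rw [SimpleGraph.dist_eq_one_iff_adj.mpr hyw] at this
      omega

theorem SimpleGraph.Connected.exists_dist_eq_of_le {V : Type*} {G : SimpleGraph V}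
    (hG : G.Connected) {y z : V} {k : ℕ} (hk : k ≤ G.dist y z) : ∃ w, G.dist w z = k := by
  induction h : G.dist y z generalizing y with
  | zero => exact ⟨y, by omega⟩
  | succ n ih =>
    rcases hk.eq_or_lt with hk | hk
    · exact ⟨y, by omega⟩
    · obtain ⟨w, -, hw⟩ := hG.exists_adj_dist_eq h
      exact ih (by omega) hw

omit [Fintype X] [DecidableEq X] in
theorem distMat_isHermitian (G : SimpleGraph X) (i : ℤ) : (distMat G i).IsHermitian := by
  ext y z
  simp [distMat, SimpleGraph.dist_comm]

omit [Fintype X] in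
theorem distMat_zero {G : SimpleGraph X} (hG : G.Connected) : distMat G 0 = 1 := by
  ext y z
  simp [distMat, one_apply, hG.dist_eq_zero_iff]

omit [Fintype X] [DecidableEq X] in
theorem distMat_eq_zero_of_lt {G : SimpleGraph X} {D i : ℕ} (hD : ∀ y z : X, G.dist y z ≤ D)
    (hi : D < i) : distMat G i = 0 := by
  ext y z
  have := hD y z
  simp only [distMat, of_apply, Matrix.zero_apply, Nat.cast_inj]
  exact if_neg (by omega)

omit [DecidableEq X] in
open Finset in
theorem distMat_mul_distMat_apply (G : SimpleGraph X) (j k : ℕ) (y z : X) :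
    (distMat G j * distMat G k) y z = #{w | G.dist y w = j ∧ G.dist w z = k} := by
  simp only [mul_apply, distMat, of_apply, Nat.cast_inj, mul_ite, mul_one, mul_zero]
  rw [Finset.natCast_card_filter]
  exact Finset.sum_congr rfl fun w _ => by split_ifs <;> simp_all

namespace IsDRG

variable {G : SimpleGraph X} {D : ℕ} {p : ℕ → ℕ → ℕ → ℕ}

omit [DecidableEq X] in
theorem p_one_succ_pos (hdrg : IsDRG G D p) {i : ℕ} (hi : i + 1 ≤ D) : 0 < p i 1 (i + 1) := by
  obtain ⟨hG, -, ⟨y₀, z, hdiam⟩, hp⟩ := hdrg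
  obtain ⟨y, hy⟩ := hG.exists_dist_eq_of_le (y := y₀) (z := z) (k := i + 1) (by omega)
  obtain ⟨w, hyw, hw⟩ := hG.exists_adj_dist_eq hy
  rw [← hp i 1 (i + 1) (by omega) (by omega) hi w z hw]
  exact Finset.card_pos.mpr ⟨y, by simp [SimpleGraph.dist_eq_one_iff_adj, hyw.symm, hy]⟩

omit [DecidableEq X] in
theorem distMat_one_mul_distMat (hdrg : IsDRG G D p) {i : ℕ} (hi : i + 1 ≤ D) :
    distMat G 1 * distMat G ((i + 1 : ℕ) : ℤ) =
      (p i 1 (i + 1) : ℂ) • distMat G i + (p (i + 1) 1 (i + 1) : ℂ) • distMat G ((i + 1 : ℕ) : ℤ)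
        + (p (i + 2) 1 (i + 1) : ℂ) • distMat G ((i + 2 : ℕ) : ℤ) := by
  obtain ⟨hG, hdiam, -, hp⟩ := hdrg
  ext y z
  have hcard := distMat_mul_distMat_apply G 1 (i + 1) y z
  rw [Nat.cast_one] at hcard
  rw [hcard]
  have hyz := hdiam y z
  simp only [Matrix.add_apply, Matrix.smul_apply, distMat, of_apply, Nat.cast_inj, smul_eq_mul,
    mul_ite, mul_one, mul_zero]
  by_cases hnear : G.dist y z = i ∨ G.dist y z = i + 1 ∨ G.dist y z = i + 2
  · rw [hp _ 1 (i + 1) hyz (by omega) hi y z rfl]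
    rcases hnear with h | h | h <;> simp [h]
  · have hfar : ∀ w, ¬(G.dist y w = 1 ∧ G.dist w z = i + 1) := by
      rintro w ⟨hyw, hwz⟩
      have := hG.dist_triangle (u := y) (v := w) (w := z)
      have := hG.dist_triangle (u := w) (v := y) (w := z)
      have hwy : G.dist w y = 1 := by rwa [SimpleGraph.dist_comm]
      omega
    simp only [Finset.filter_false_of_mem fun w _ => hfar w, Finset.card_empty]
    simp only [not_or] at hnear
    simp [hnear.1, hnear.2.1, hnear.2.2]

theorem mul_distMat_eq_zero (hdrg : IsDRG G D p) {E : Matrix X X ℂ} {θ : ℂ}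
    (hEA : E * distMat G 1 = θ • E) (hED : E * distMat G D = 0) {i : ℕ} (hi : i ≤ D) :
    E * distMat G i = 0 := by
  -- `b_k ≠ 0`, so the recurrence recovers `E A_k = 0` from `E A_{k+1} = E A_{k+2} = 0`
  suffices E * distMat G i = 0 ∧ E * distMat G ((i + 1 : ℕ) : ℤ) = 0 from this.1
  induction hi using Nat.decreasingInduction with
  | self => exact ⟨hED, by rw [distMat_eq_zero_of_lt hdrg.2.1 (Nat.lt_succ_self D), mul_zero]⟩
  | of_succ k hk ih =>
    refine ⟨?_, ih.1⟩
    have hrec := congrArg (E * ·) (hdrg.distMat_one_mul_distMat hk)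
    simp only [← mul_assoc, hEA, smul_mul_assoc, ih.1, mul_add, mul_smul_comm, ih.2,
      smul_zero, add_zero] at hrec
    exact (smul_eq_zero.mp hrec.symm).resolve_left (by exact_mod_cast (hdrg.p_one_succ_pos hk).ne')

theorem mul_distMat_diam_ne_zero (hdrg : IsDRG G D p) {E : Matrix X X ℂ} {θ : ℂ}
    (hEA : E * distMat G 1 = θ • E) (hE : E ≠ 0) : E * distMat G D ≠ 0 := fun hED =>
  hE <| by simpa [distMat_zero hdrg.1] using hdrg.mul_distMat_eq_zero hEA hED (Nat.zero_le D)

end IsDRG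

theorem mem_pseudoSpace_iff {G : SimpleGraph X} {D : ℕ} {θ : ℂ} {Y : Matrix X X ℂ} :
    Y ∈ pseudoSpace G D θ ↔
      Y ∈ bmAlg G ∧ ∃ c : ℂ, c • distMat G D = (distMat G 1 - θ • 1) * Y := by
  simp [pseudoSpace, Submodule.mem_span_singleton]

theorem stmt12_general (G : SimpleGraph X) (D : ℕ) (p : ℕ → ℕ → ℕ → ℕ)
    (hdrg : IsDRG G D p) (θ : ℂ)
    (E : Matrix X X ℂ) (hE0 : E ≠ 0) (hEM : E ∈ bmAlg G)
    (hAE : distMat G 1 * E = θ • E) :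
    pseudoSpace G D θ = Submodule.span ℂ {E} := by
  have hEA : E * distMat G 1 = θ • E := by
    rw [← (Algebra.commute_of_mem_adjoin_self hEM).eq, hAE]
  refine le_antisymm (fun Y hY => ?_) ?_
  · obtain ⟨hYM, c, hc⟩ := mem_pseudoSpace_iff.mp hY
    have hc0 : c = 0 := by
      have : c • (E * distMat G D) = 0 := by
        rw [← mul_smul_comm, hc, ← mul_assoc, mul_sub, hEA, mul_smul_comm, mul_one, sub_self,
          zero_mul]
      exact (smul_eq_zero.mp this).resolve_right (hdrg.mul_distMat_diam_ne_zero hEA hE0)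
    have hAY : distMat G 1 * Y = θ • Y := by
      rwa [hc0, zero_smul, eq_comm, sub_mul, smul_mul_assoc, one_mul, sub_eq_zero] at hc
    exact (distMat_isHermitian G 1).mem_span_singleton_of_mul_eq_smul hEM hYM hE0 hAE hAY
  · refine (Submodule.span_singleton_le_iff_mem _ _).mpr (mem_pseudoSpace_iff.mpr ⟨hEM, 0, ?_⟩)
    rw [zero_smul, sub_mul, hAE, smul_mul_assoc, one_mul, sub_self]

/-- Let `θ` be an eigenvalue of `A` and let `E` be a nonzero element of
`M` with `A E = θ E`.  Then `M(θ) = ℂ E`. -/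
theorem stmt12 (G : SimpleGraph X) (D : ℕ) (p : ℕ → ℕ → ℕ → ℕ)
    (hdrg : IsDRG G D p) (hD : 3 ≤ D)
    (θ : ℂ) (hθ : Module.End.HasEigenvalue (Matrix.mulVecLin (distMat G 1)) θ)
    (E : Matrix X X ℂ) (hE0 : E ≠ 0) (hEM : E ∈ bmAlg G)
    (hAE : distMat G 1 * E = θ • E) :
    pseudoSpace G D θ = Submodule.span ℂ {E} :=
  stmt12_general G D p hdrg θ E hE0 hEM hAE
end
end

section
/- Let W be a thin irreducible T-module with endpoint 1 and local eigenvalue η, and assume η ≠ −1. Let v be a nonzero vector in E_1*W, set η̃ = −1 − b_1/(1+η), and let E be a nonzero element of M with (A − η̃I)E ∈ ℂA_D. Then Ev ∈ E_D*V. -/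
open Matrix Polynomial BigOperators

noncomputable section

variable {X : Type*} [Fintype X] [DecidableEq X]

/-!
Write `E = ∑ lᵢ Aᵢ`. The entries of `(A - η̃ I) E = c A_D` at distances `0` and `1` give
`k l₁ = η̃ l₀` and `l₀ + a₁ l₁ + b₁ l₂ = η̃ l₁`; for `η̃ = -1 - b₁ / (1 + η)` these force
`l₀ + η l₁ - (1 + η) l₂ = 0`. As `v` lives on the first subconstituent, is a local eigenvector
and has coordinate sum `0` (endpoint `1`), on the first subconstituent `E v` equals
`(l₀ + η l₁ - (1 + η) l₂) v = 0`. So `E v ∈ W` vanishes at distances `< 2`.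

If `E v` vanishes at distances `< m`, where `2 ≤ m < D`, so does `A E v = η̃ E v + c A_D v`.
Were `E_m* E v ≠ 0`, thinness would make the vectors of `W` vanishing at distances `< m` a
`T`-submodule containing `E v ≠ 0` but not `v`, against irreducibility. Hence `E v ∈ E_D* V`.
-/

open Finset

set_option linter.unusedSectionVars false

lemma dualIdem_mulVec_apply (G : SimpleGraph X) (x : X) (i : ℤ) (u : X → ℂ) (y : X) :
    (dualIdem G x i).mulVec u y = if (G.dist x y : ℤ) = i then u y else 0 := by
  by_cases h : (G.dist x y : ℤ) = i <;> simp [dualIdem, mulVec, dotProduct, h]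

lemma distMat_mulVec_apply (G : SimpleGraph X) (n : ℕ) (u : X → ℂ) (y : X) :
    (distMat G n).mulVec u y = ∑ z with G.dist y z = n, u z := by
  simp [distMat, mulVec, dotProduct, sum_filter]

lemma distMat_one_mulVec_apply (G : SimpleGraph X) (u : X → ℂ) (y : X) :
    (distMat G 1).mulVec u y = ∑ z with G.dist y z = 1, u z := by
  simpa using distMat_mulVec_apply G 1 u y

lemma sub_smul_one_mul_apply {G : SimpleGraph X} {E : Matrix X X ℂ} {l : ℕ → ℂ}
    (hl : ∀ y z, E y z = l (G.dist y z)) (θ : ℂ) (y z : X) :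
    ((distMat G 1 - θ • 1) * E) y z
      = ∑ w with G.dist y w = 1, l (G.dist w z) - θ * l (G.dist y z) := by
  rw [sub_mul, Matrix.sub_apply, smul_mul, one_mul, Matrix.smul_apply, smul_eq_mul, mul_apply, hl,
    sum_filter]
  simp only [distMat, of_apply, Nat.cast_eq_one, ite_mul, one_mul, zero_mul, hl]

namespace IsDRG

variable {G : SimpleGraph X} {D : ℕ} {p : ℕ → ℕ → ℕ → ℕ}

lemma exists_apply_eq_comp_dist (hdrg : IsDRG G D p) {E : Matrix X X ℂ} (hE : E ∈ bmAlg G) :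
    ∃ l : ℕ → ℂ, ∀ y z, E y z = l (G.dist y z) := by
  obtain ⟨hconn, hdle, -, hp⟩ := hdrg
  induction hE using Algebra.adjoin_induction with
  | mem B hB =>
    rw [Set.mem_singleton_iff.mp hB]
    exact ⟨fun n => if n = 1 then 1 else 0,
      fun y z => by simp only [distMat, of_apply, Nat.cast_eq_one]⟩
  | algebraMap r =>
    refine ⟨fun n => if n = 0 then r else 0, fun y z => ?_⟩
    simp [algebraMap_matrix_apply, hconn.dist_eq_zero_iff]
  | add B C _ _ hB hC =>
    obtain ⟨l, hl⟩ := hB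
    obtain ⟨m, hm⟩ := hC
    exact ⟨l + m, fun y z => by simp [hl, hm]⟩
  | mul B C _ _ hB hC =>
    obtain ⟨l, hl⟩ := hB
    obtain ⟨m, hm⟩ := hC
    set S := range (D + 1) ×ˢ range (D + 1)
    refine ⟨fun h => ∑ ij ∈ S, p h ij.1 ij.2 * (l ij.1 * m ij.2), fun y z => ?_⟩
    have hmaps : ∀ w ∈ (univ : Finset X), (G.dist y w, G.dist w z) ∈ S := fun w _ => by
      simp [S, hdle]
    rw [mul_apply, ← sum_fiberwise_of_maps_to hmaps]
    refine sum_congr rfl fun ⟨i, j⟩ hij => ?_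
    obtain ⟨hi, hj⟩ : i ≤ D ∧ j ≤ D := by simpa [S, Nat.lt_succ_iff] using hij
    simp only [Prod.mk.injEq]
    rw [sum_congr rfl fun w hw => by rw [hl, hm, (mem_filter.mp hw).2.1, (mem_filter.mp hw).2.2],
      sum_const, nsmul_eq_mul, ← hp _ _ _ (hdle y z) hi hj y z rfl]

lemma exists_adj_adj_dist_two (hdrg : IsDRG G D p) (hD : 2 ≤ D) :
    ∃ y z w : X, G.dist y z = 1 ∧ G.dist y w = 1 ∧ G.dist w z = 2 := by
  obtain ⟨hconn, -, ⟨a, b, hab⟩, -⟩ := hdrg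
  obtain ⟨q, hq⟩ := hconn.exists_walk_length_eq_dist a b
  obtain ⟨z, y, w, hzy, hyw, hzw, hne⟩ := q.exists_adj_adj_not_adj_ne hq (by omega)
  have hlt : 1 < G.dist w z := hconn.one_lt_dist_of_ne_of_not_adj (Ne.symm hne) (hzw ∘ .symm)
  have hle : G.dist w z ≤ G.dist w y + G.dist y z := hconn.dist_triangle
  rw [SimpleGraph.dist_eq_one_iff_adj.mpr hyw.symm, SimpleGraph.dist_eq_one_iff_adj.mpr hzy.symm]
    at hle
  exact ⟨y, z, w, SimpleGraph.dist_eq_one_iff_adj.mpr hzy.symm,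
    SimpleGraph.dist_eq_one_iff_adj.mpr hyw, by omega⟩

lemma p_one_one_two_ne_zero (hdrg : IsDRG G D p) (hD : 2 ≤ D) : p 1 1 2 ≠ 0 := by
  obtain ⟨y, z, w, hyz, hyw, hwz⟩ := hdrg.exists_adj_adj_dist_two hD
  rw [← hdrg.2.2.2 1 1 2 (by omega) (by omega) hD y z hyz]
  exact card_ne_zero_of_mem (mem_filter.mpr ⟨mem_univ w, hyw, hwz⟩)

lemma sum_adj_comp_dist (hdrg : IsDRG G D p) (hD : 2 ≤ D) {y z : X} (hyz : G.dist y z = 1)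
    (f : ℕ → ℂ) :
    ∑ w with G.dist y w = 1, f (G.dist w z) = f 0 + p 1 1 1 * f 1 + p 1 1 2 * f 2 := by
  obtain ⟨hconn, -, -, hp⟩ := hdrg
  have hmaps : ∀ w ∈ ({w | G.dist y w = 1} : Finset X), G.dist w z ∈ range 3 := by
    intro w hw
    have hle : G.dist w z ≤ G.dist w y + G.dist y z := hconn.dist_triangle
    rw [SimpleGraph.dist_comm (u := w) (v := y), (mem_filter.mp hw).2, hyz] at hle
    exact mem_range.mpr (by omega)
  have hfiber : ∀ j ≤ D, ∑ w ∈ {w | G.dist y w = 1} with G.dist w z = j, f (G.dist w z)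
      = p 1 1 j * f j := by
    intro j hj
    rw [sum_congr rfl fun w hw => by rw [(mem_filter.mp hw).2], sum_const, nsmul_eq_mul,
      filter_filter, hp 1 1 j (by omega) (by omega) hj y z hyz]
  have hp0 : p 1 1 0 = 1 := by
    rw [← hp 1 1 0 (by omega) (by omega) (by omega) y z hyz, card_eq_one]
    refine ⟨z, ext fun w => ?_⟩
    simp only [mem_filter, mem_univ, true_and, mem_singleton, hconn.dist_eq_zero_iff]
    exact ⟨And.right, by rintro rfl; exact ⟨hyz, rfl⟩⟩
  rw [← sum_fiberwise_of_maps_to hmaps]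
  simp only [sum_range_succ, sum_range_zero, zero_add, hfiber 0 (by omega),
    hfiber 1 (by omega), hfiber 2 hD, hp0, Nat.cast_one, one_mul]

lemma three_term_relation (hdrg : IsDRG G D p) (hD : 2 ≤ D) {E : Matrix X X ℂ} {l : ℕ → ℂ}
    (hl : ∀ y z, E y z = l (G.dist y z)) {θ c : ℂ}
    (hE : (distMat G 1 - θ • 1) * E = c • distMat G D) :
    (1 + p 1 1 1 + p 1 1 2 : ℂ) * l 1 = θ * l 0 ∧
      l 0 + p 1 1 1 * l 1 + p 1 1 2 * l 2 = θ * l 1 := by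
  obtain ⟨y, z, -, hyz, -, -⟩ := hdrg.exists_adj_adj_dist_two hD
  have hentry : ∀ a b, G.dist a b < D →
      ∑ w with G.dist a w = 1, l (G.dist w b) = θ * l (G.dist a b) := by
    intro a b hab
    have h := congrFun (congrFun hE a) b
    rwa [sub_smul_one_mul_apply hl, Matrix.smul_apply, distMat, of_apply,
      if_neg (by exact_mod_cast hab.ne), smul_zero, sub_eq_zero] at h
  constructor
  · have h := hentry y y (by rw [SimpleGraph.dist_self]; omega)
    rw [SimpleGraph.dist_self,
      sum_congr rfl fun w hw => by rw [SimpleGraph.dist_comm, (mem_filter.mp hw).2],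
      hdrg.sum_adj_comp_dist hD hyz fun _ => l 1] at h
    linear_combination h
  · have h := hentry y z (by omega)
    rwa [hdrg.sum_adj_comp_dist hD hyz, hyz] at h

end IsDRG

lemma eq_zero_of_three_term_relation {a b η l₀ l₁ l₂ : ℂ} (hb : b ≠ 0) (hη : 1 + η ≠ 0)
    (h₁ : (1 + a + b) * l₁ = (-1 - b / (1 + η)) * l₀)
    (h₂ : l₀ + a * l₁ + b * l₂ = (-1 - b / (1 + η)) * l₁) :
    l₀ + η * l₁ - (1 + η) * l₂ = 0 := by
  have hθ : (-1 - b / (1 + η)) * (1 + η) = -(1 + η) - b := by field_simp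
  refine (mul_eq_zero.mp ?_).resolve_left hb
  linear_combination (1 + η) * h₁ - (1 + η) * h₂ + (l₀ - l₁) * hθ

lemma mulVec_apply_of_dist_eq_one {G : SimpleGraph X} (hconn : G.Connected) {x y : X}
    {E : Matrix X X ℂ} {l : ℕ → ℂ} (hl : ∀ y z, E y z = l (G.dist y z)) {v : X → ℂ}
    (hsupp : ∀ z, G.dist x z ≠ 1 → v z = 0) (hy : G.dist x y = 1) :
    E.mulVec v y
      = (l 0 - l 2) * v y + (l 1 - l 2) * (distMat G 1).mulVec v y + l 2 * ∑ z, v z := by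
  rw [← Fintype.sum_ite_eq y v, distMat_one_mulVec_apply, sum_filter]
  simp only [mulVec, dotProduct, hl, mul_sum, ← sum_add_distrib]
  refine sum_congr rfl fun z _ => ?_
  by_cases hz : G.dist x z = 1
  · have hle : G.dist y z ≤ G.dist y x + G.dist x z := hconn.dist_triangle
    rw [SimpleGraph.dist_comm (u := y) (v := x), hy, hz] at hle
    by_cases hyz : y = z
    · subst hyz
      simp only [SimpleGraph.dist_self, if_true, zero_ne_one, if_false]
      ring
    · have hpos := hconn.pos_dist_of_ne hyz
      obtain h | h : G.dist y z = 1 ∨ G.dist y z = 2 := by omega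
      · simp only [hyz, h, if_true, if_false]
        ring
      · simp [hyz, h]
  · simp [hsupp z hz]

def vanishBelow (G : SimpleGraph X) (x : X) (m : ℕ) : Submodule ℂ (X → ℂ) where
  carrier := {w | ∀ y, G.dist x y < m → w y = 0}
  add_mem' ha hb y hy := by simp [ha y hy, hb y hy]
  zero_mem' _ _ := rfl
  smul_mem' c _ ha y hy := by simp [ha y hy]

section VanishBelow

variable {G : SimpleGraph X} {x : X} {D m : ℕ} {v w : X → ℂ}

lemma mem_vanishBelow : w ∈ vanishBelow G x m ↔ ∀ y, G.dist x y < m → w y = 0 := Iff.rfl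

lemma vanishBelow_anti {m n : ℕ} (h : m ≤ n) : vanishBelow G x n ≤ vanishBelow G x m :=
  fun _ hw y hy => hw y (hy.trans_le h)

lemma dualIdem_mulVec_mem_vanishBelow (i : ℤ) (hw : w ∈ vanishBelow G x m) :
    (dualIdem G x i).mulVec w ∈ vanishBelow G x m := fun y hy => by
  simp [dualIdem_mulVec_apply, hw y hy]

lemma dualIdem_mulVec_ne_zero (hw : w ∈ vanishBelow G x m) (hw' : w ∉ vanishBelow G x (m + 1)) :
    (dualIdem G x m).mulVec w ≠ 0 := by
  obtain ⟨y, hy, hwy⟩ : ∃ y, G.dist x y < m + 1 ∧ w y ≠ 0 := by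
    simpa [mem_vanishBelow] using hw'
  have hym : G.dist x y = m := by
    by_contra h
    exact hwy (hw y (by omega))
  intro h
  exact hwy (by simpa [dualIdem_mulVec_apply, hym] using congrFun h y)

lemma distMat_one_mulVec_apply_eq_dualIdem (hconn : G.Connected) (hw : w ∈ vanishBelow G x m)
    {y : X} (hy : G.dist x y < m) :
    (distMat G 1).mulVec w y = (distMat G 1).mulVec ((dualIdem G x m).mulVec w) y := by
  simp only [distMat_one_mulVec_apply, dualIdem_mulVec_apply, Nat.cast_inj]
  refine sum_congr rfl fun z hz => ?_
  have hle : G.dist x z ≤ G.dist x y + G.dist y z := hconn.dist_triangle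
  rw [(mem_filter.mp hz).2] at hle
  split_ifs with h
  · rfl
  · exact hw z (by omega)

lemma distMat_mulVec_mem_vanishBelow (hconn : G.Connected)
    (hsupp : ∀ z, G.dist x z ≠ 1 → v z = 0) :
    (distMat G D).mulVec v ∈ vanishBelow G x (D - 1) := by
  intro y hy
  rw [distMat_mulVec_apply]
  refine sum_eq_zero fun z hz => hsupp z fun hz1 => ?_
  have hle : G.dist y z ≤ G.dist y x + G.dist x z := hconn.dist_triangle
  rw [SimpleGraph.dist_comm (u := y) (v := x), (mem_filter.mp hz).2, hz1] at hle
  omega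

lemma mem_range_dualIdem_of_mem_vanishBelow (hdle : ∀ y, G.dist x y ≤ D)
    (hw : w ∈ vanishBelow G x D) : w ∈ LinearMap.range (dualIdem G x D).mulVecLin := by
  refine ⟨w, funext fun y => ?_⟩
  rw [mulVecLin_apply, dualIdem_mulVec_apply]
  split_ifs with h
  · rfl
  · exact (hw y (lt_of_le_of_ne (hdle y) (by exact_mod_cast h))).symm

end VanishBelow

lemma exists_smul_eq_of_finrank_le_one {K V : Type*} [Field K] [AddCommGroup V] [Module K V]
    [FiniteDimensional K V] {S : Submodule K V} (hS : Module.finrank K S ≤ 1) {a b : V}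
    (ha : a ∈ S) (hb : b ∈ S) (ha0 : a ≠ 0) : ∃ t : K, t • a = b := by
  obtain ⟨t, ht⟩ := exists_smul_eq_of_finrank_eq_one
    (le_antisymm hS (Module.finrank_pos_iff_exists_ne_zero.mpr ⟨⟨a, ha⟩, by simpa using ha0⟩))
    (x := ⟨a, ha⟩) (by simpa using ha0) ⟨b, hb⟩
  exact ⟨t, congrArg Subtype.val ht⟩

section TModule

variable {G : SimpleGraph X} {x : X} {D m : ℕ} {W U : Submodule ℂ (X → ℂ)} {u v w : X → ℂ}

lemma distMat_one_mem_twAlg : distMat G 1 ∈ twAlg G x D :=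
  Algebra.subset_adjoin (Set.mem_union_left _ rfl)

lemma dualIdem_mem_twAlg {i : ℕ} (hi : i ≤ D) : dualIdem G x i ∈ twAlg G x D :=
  Algebra.subset_adjoin (Set.mem_union_right _ ⟨i, hi, rfl⟩)

lemma bmAlg_le_twAlg : bmAlg G ≤ twAlg G x D :=
  Algebra.adjoin_mono Set.subset_union_left

lemma isTMod_of_forall_mulVec_mem (hA : ∀ u ∈ U, (distMat G 1).mulVec u ∈ U)
    (hE : ∀ i ≤ D, ∀ u ∈ U, (dualIdem G x i).mulVec u ∈ U) : IsTMod G x D U := by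
  intro B hB
  induction hB using Algebra.adjoin_induction with
  | mem B hB =>
    rcases hB with rfl | ⟨i, hi, rfl⟩
    exacts [hA, hE i hi]
  | algebraMap r =>
    intro u hu
    rw [Algebra.algebraMap_eq_smul_one, smul_mulVec, one_mulVec]
    exact U.smul_mem r hu
  | add B C _ _ hB hC =>
    intro u hu
    rw [add_mulVec]
    exact U.add_mem (hB u hu) (hC u hu)
  | mul B C _ _ hB hC =>
    intro u hu
    rw [← mulVec_mulVec]
    exact hB _ (hC u hu)

lemma mem_of_mem_map_dualIdem (hW : IsTMod G x D W) {i : ℕ} (hi : i ≤ D)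
    (hv : v ∈ W.map (dualIdem G x i).mulVecLin) : v ∈ W := by
  obtain ⟨v', hv', rfl⟩ := hv
  exact hW _ (dualIdem_mem_twAlg hi) v' hv'

lemma dualIdem_mulVec_of_mem_map {i : ℤ} (hv : v ∈ W.map (dualIdem G x i).mulVecLin) :
    (dualIdem G x i).mulVec v = v := by
  obtain ⟨v', -, rfl⟩ := hv
  funext y
  simp only [mulVecLin_apply, dualIdem_mulVec_apply]
  split_ifs <;> rfl

lemma apply_eq_zero_of_mem_map_dualIdem {i : ℤ} (hv : v ∈ W.map (dualIdem G x i).mulVecLin)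
    {z : X} (hz : (G.dist x z : ℤ) ≠ i) : v z = 0 := by
  rw [← dualIdem_mulVec_of_mem_map hv, dualIdem_mulVec_apply, if_neg hz]

lemma distMat_one_mulVec_apply_of_local_eigenvector {η : ℂ}
    (hv : v ∈ W.map (dualIdem G x 1).mulVecLin)
    (hloc : (dualIdem G x 1 * distMat G 1 * dualIdem G x 1).mulVec v = η • v) {y : X}
    (hy : G.dist x y = 1) : (distMat G 1).mulVec v y = η * v y := by
  simpa [← mulVec_mulVec, dualIdem_mulVec_of_mem_map hv, dualIdem_mulVec_apply, hy]
    using congrFun hloc y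

lemma HasEndpointOne.apply_eq_zero (hend : HasEndpointOne G x W) (hw : w ∈ W) : w x = 0 := by
  have h : (dualIdem G x 0).mulVecLin w ∈ W.map (dualIdem G x 0).mulVecLin :=
    Submodule.mem_map_of_mem hw
  rw [hend.1, Submodule.mem_bot] at h
  simpa [dualIdem_mulVec_apply] using congrFun h x

lemma HasEndpointOne.sum_eq_zero (hend : HasEndpointOne G x W) (hW : IsTMod G x D W)
    (hv : v ∈ W) (hsupp : ∀ z, G.dist x z ≠ 1 → v z = 0) : ∑ z, v z = 0 := by
  rw [← hend.apply_eq_zero (hW _ distMat_one_mem_twAlg v hv), distMat_one_mulVec_apply,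
    sum_filter_of_ne fun z _ hz => by_contra fun h => hz (hsupp z h)]

lemma HasEndpointOne.mulVec_mem_vanishBelow_two (hend : HasEndpointOne G x W)
    (hconn : G.Connected) (hW : IsTMod G x D W) (hv : v ∈ W)
    (hsupp : ∀ z, G.dist x z ≠ 1 → v z = 0) {η : ℂ}
    (hAv : ∀ y, G.dist x y = 1 → (distMat G 1).mulVec v y = η * v y) {E : Matrix X X ℂ}
    (hEv : E.mulVec v ∈ W) {l : ℕ → ℂ} (hl : ∀ y z, E y z = l (G.dist y z))
    (hl₀ : l 0 + η * l 1 - (1 + η) * l 2 = 0) : E.mulVec v ∈ vanishBelow G x 2 := by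
  intro y hy
  obtain h | h : G.dist x y = 0 ∨ G.dist x y = 1 := by omega
  · rw [← hconn.dist_eq_zero_iff.mp h]
    exact hend.apply_eq_zero hEv
  · rw [mulVec_apply_of_dist_eq_one hconn hl hsupp h, hAv y h, hend.sum_eq_zero hW hv hsupp]
    linear_combination v y * hl₀

/-- By thinness every vector of `W` is, on the `m`-th sphere, a multiple of `w`; as only that
sphere is seen by `A` below `m`, the vectors of `W` vanishing below `m` are `A`-invariant. -/
lemma IsTMod.inf_vanishBelow (hconn : G.Connected) (hW : IsTMod G x D W)
    (hthin : Module.finrank ℂ (W.map (dualIdem G x m).mulVecLin) ≤ 1)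
    (hw : w ∈ W) (hwm : w ∈ vanishBelow G x m) (hw' : w ∉ vanishBelow G x (m + 1))
    (hAw : (distMat G 1).mulVec w ∈ vanishBelow G x m) :
    IsTMod G x D (W ⊓ vanishBelow G x m) := by
  refine isTMod_of_forall_mulVec_mem (fun u ⟨huW, hum⟩ => ⟨hW _ distMat_one_mem_twAlg u huW,
    fun y hy => ?_⟩) fun i hi u ⟨huW, hum⟩ =>
      ⟨hW _ (dualIdem_mem_twAlg hi) u huW, dualIdem_mulVec_mem_vanishBelow _ hum⟩
  obtain ⟨t, ht⟩ := exists_smul_eq_of_finrank_le_one hthin (Submodule.mem_map_of_mem hw)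
    (Submodule.mem_map_of_mem huW) (dualIdem_mulVec_ne_zero hwm hw')
  rw [mulVecLin_apply, mulVecLin_apply] at ht
  rw [distMat_one_mulVec_apply_eq_dualIdem hconn hum hy, ← ht, mulVec_smul, Pi.smul_apply,
    ← distMat_one_mulVec_apply_eq_dualIdem hconn hwm hy, hAw y hy, smul_zero]

lemma IsIrredTMod.mem_vanishBelow_succ (hconn : G.Connected) (hirr : IsIrredTMod G x D W)
    (hthin : IsThin G x D W) (hm : m ≤ D) (hu : u ∈ W) (hum : u ∉ vanishBelow G x m)
    (hw : w ∈ W) (hwm : w ∈ vanishBelow G x m)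
    (hAw : (distMat G 1).mulVec w ∈ vanishBelow G x m) : w ∈ vanishBelow G x (m + 1) := by
  by_contra hw'
  rcases hirr.2.2 _ inf_le_left (hirr.1.inf_vanishBelow hconn (hthin m hm) hw hwm hw' hAw)
    with h | h
  · have hw0 : w ∈ W ⊓ vanishBelow G x m := ⟨hw, hwm⟩
    rw [h, Submodule.mem_bot] at hw0
    exact hw' (hw0 ▸ zero_mem _)
  · have hu' : u ∈ W ⊓ vanishBelow G x m := by rw [h]; exact hu
    exact hum hu'.2

end TModule

lemma IsIrredTMod.mem_vanishBelow_of_sub_smul_mem {G : SimpleGraph X} {x : X} {D : ℕ}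
    {W : Submodule ℂ (X → ℂ)} (hconn : G.Connected) (hirr : IsIrredTMod G x D W)
    (hthin : IsThin G x D W) {k n : ℕ} (hkn : k ≤ n) (hn : n ≤ D) {u w : X → ℂ} (hu : u ∈ W)
    (huk : u ∉ vanishBelow G x k) (hw : w ∈ W) (hwk : w ∈ vanishBelow G x k) {θ : ℂ}
    (hAw : (distMat G 1).mulVec w - θ • w ∈ vanishBelow G x (n - 1)) :
    w ∈ vanishBelow G x n := by
  induction n, hkn using Nat.le_induction with
  | base => exact hwk
  | succ m hkm ih =>
    have hwm := ih (by omega) (vanishBelow_anti (by omega) hAw)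
    refine hirr.mem_vanishBelow_succ hconn hthin (by omega) hu
      (fun h => huk (vanishBelow_anti hkm h)) hw hwm ?_
    rw [← sub_add_cancel ((distMat G 1).mulVec w) (θ • w)]
    exact add_mem (vanishBelow_anti (by omega) hAw) (Submodule.smul_mem _ θ hwm)

theorem stmt15_general (G : SimpleGraph X) (D : ℕ) (p : ℕ → ℕ → ℕ → ℕ)
    (hdrg : IsDRG G D p) (hD : 3 ≤ D) (x : X)
    (W : Submodule ℂ (X → ℂ))
    (hirr : IsIrredTMod G x D W) (hthin : IsThin G x D W)
    (hend : HasEndpointOne G x W)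
    (η : ℂ)
    (hloc : ∀ w ∈ W.map (dualIdem G x 1).mulVecLin,
      (dualIdem G x 1 * distMat G 1 * dualIdem G x 1).mulVec w = η • w)
    (hη : η ≠ -1)
    (v : X → ℂ) (hv : v ≠ 0) (hvW : v ∈ W.map (dualIdem G x 1).mulVecLin)
    (E : Matrix X X ℂ) (hEM : E ∈ bmAlg G)
    (hEc : ∃ c : ℂ, (distMat G 1 - (-1 - (p 1 1 2 : ℂ) / (1 + η)) • 1) * E
      = c • distMat G (D : ℤ)) :
    E.mulVec v ∈ LinearMap.range (dualIdem G x (D : ℤ)).mulVecLin := by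
  obtain ⟨c, hc⟩ := hEc
  have hconn : G.Connected := hdrg.1
  have hvW' : v ∈ W := mem_of_mem_map_dualIdem hirr.1 (i := 1) (by omega) hvW
  have hsupp : ∀ z, G.dist x z ≠ 1 → v z = 0 := fun z hz =>
    apply_eq_zero_of_mem_map_dualIdem hvW (by exact_mod_cast hz)
  obtain ⟨l, hl⟩ := hdrg.exists_apply_eq_comp_dist hEM
  obtain ⟨h₁, h₂⟩ := hdrg.three_term_relation (by omega) hl hc
  have hl₀ := eq_zero_of_three_term_relation
    (by exact_mod_cast hdrg.p_one_one_two_ne_zero (by omega))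
    (fun h => hη (by linear_combination h)) h₁ h₂
  have hEvW : E.mulVec v ∈ W := hirr.1 E (bmAlg_le_twAlg hEM) v hvW'
  have hEv₂ := hend.mulVec_mem_vanishBelow_two hconn hirr.1 hvW' hsupp
    (fun _ => distMat_one_mulVec_apply_of_local_eigenvector hvW (hloc v hvW)) hEvW hl hl₀
  have hv₂ : v ∉ vanishBelow G x 2 := fun h => hv <| funext fun z => by
    by_cases hz : G.dist x z = 1
    exacts [h z (by omega), hsupp z hz]
  have hAEv : (distMat G 1).mulVec (E.mulVec v) - (-1 - (p 1 1 2 : ℂ) / (1 + η)) • E.mulVec v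
      = c • (distMat G D).mulVec v := by
    simpa only [← mulVec_mulVec, sub_mulVec, smul_mulVec, one_mulVec]
      using congrArg (fun B => B.mulVec v) hc
  refine mem_range_dualIdem_of_mem_vanishBelow (hdrg.2.1 x) ?_
  exact hirr.mem_vanishBelow_of_sub_smul_mem hconn hthin (by omega) le_rfl hvW' hv₂ hEvW hEv₂
    (hAEv ▸ Submodule.smul_mem _ c (distMat_mulVec_mem_vanishBelow hconn hsupp))

/-- Let `W` be a thin irreducible `T`-module with endpoint 1 and local
eigenvalue `η ≠ -1`.  Let `v` be a nonzero vector in `E₁* W`, set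
`η̃ = -1 - b₁/(1+η)`, and let `E` be a nonzero element of `M` with
`(A - η̃ I) E ∈ ℂ A_D`.  Then `E v ∈ E_D* V`. -/
theorem stmt15 (G : SimpleGraph X) (D : ℕ) (p : ℕ → ℕ → ℕ → ℕ)
    (hdrg : IsDRG G D p) (hD : 3 ≤ D) (x : X)
    (W : Submodule ℂ (X → ℂ))
    (hirr : IsIrredTMod G x D W) (hthin : IsThin G x D W)
    (hend : HasEndpointOne G x W)
    (η : ℂ)
    (hloc : ∀ w ∈ W.map (dualIdem G x 1).mulVecLin,
      (dualIdem G x 1 * distMat G 1 * dualIdem G x 1).mulVec w = η • w)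
    (hη : η ≠ -1)
    (v : X → ℂ) (hv : v ≠ 0) (hvW : v ∈ W.map (dualIdem G x 1).mulVecLin)
    (E : Matrix X X ℂ) (hE0 : E ≠ 0) (hEM : E ∈ bmAlg G)
    (hEc : ∃ c : ℂ, (distMat G 1 - (-1 - (p 1 1 2 : ℂ) / (1 + η)) • 1) * E
      = c • distMat G (D : ℤ)) :
    E.mulVec v ∈ LinearMap.range (dualIdem G x (D : ℤ)).mulVecLin :=
  stmt15_general G D p hdrg hD x W hirr hthin hend η hloc hη v hv hvW E hEM hEc
end
end
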